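/- Let α : F → ℝ satisfy α_j ≥ 0 for all j, ∑_{j ∈ F} α_j² = 1, and (∑_{j ∈ F} α_j)² < 2^n. Set R := (∑_j α_j)² − 1, c_k := 2^{-n}(∑_j (-1)^{(k*j)_0} α_j)², and for k ≠ 0 set Pr(k|α) := (∑_j (-1)^{(k*j)_0} α_j)² / (2^n − 1 − R); for l ∈ F set ρ_l := ∑_{k ≠ 0} Pr(k|α) • E_{l+k, l+k}. Then Pr(·|α) is a probability distribution on F \ {0} (nonnegative and summing to 1, so each ρ_l is positive semidefinite with trace 1), and every matrix ρ ∈ Matrix F F ℂ admits the quasiprobability decomposition ρ = (1/(R+1)) • ∑_{j ∈ F} ∑_{k ∈ F} c_k • (S_{j,k} * ρ * S_{j,k}) − (2^n/(R+1) − 1) • ∑_{l ∈ F} ρ_{l,l} • ρ_l. -/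

import Mathlib

open scoped ComplexOrder

variable {n : ℕ} [NeZero n] {F : Type*} [Field F] [Fintype F] [DecidableEq F]
  [Algebra (ZMod 2) F]

/-- The phase operator `Ẑ_a`: the diagonal matrix with `(Ẑ_a)_{k,k} = (-1)^{(k*a)_0}`. -/
noncomputable def phaseZ (b : Module.Basis (Fin n) (ZMod 2) F) (a : F) : Matrix F F ℂ :=
  Matrix.diagonal fun k => (-1 : ℂ) ^ ((b.repr (k * a)) 0).val

/-- The shift operator `X̂_a`: `(X̂_a)_{k,l} = 1` if `l = k + a` and `0` otherwise. -/
def shiftX (a : F) : Matrix F F ℂ :=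
  fun k l => if l = k + a then 1 else 0

/-- `ν(x) = ∑_{i<n} (x_i).val * 2^i`. -/
noncomputable def nu (b : Module.Basis (Fin n) (ZMod 2) F) (x : F) : ℕ :=
  ∑ i : Fin n, ((b.repr x) i).val * 2 ^ i.val

/-- The phase factor `s_{j,k} := ∏_{0 ≤ r,t < n} I^{ν(j * (k_r • b r) * (k_t • b t))}`. -/
noncomputable def sFactor (b : Module.Basis (Fin n) (ZMod 2) F) (j k : F) : ℂ :=
  ∏ r : Fin n, ∏ t : Fin n,
    Complex.I ^ nu b (j * ((b.repr k) r • b r) * ((b.repr k) t • b t))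

/-- `S_{j,k} := s_{j,k} • (Ẑ_{j*k} * X̂_k)`. -/
noncomputable def Sop (b : Module.Basis (Fin n) (ZMod 2) F) (j k : F) : Matrix F F ℂ :=
  sFactor b j k • (phaseZ b (j * k) * shiftX k)


set_option linter.unusedSectionVars false in
private lemma charF' : CharP F 2 :=
  charP_of_injective_algebraMap (algebraMap (ZMod 2) F).injective 2

private lemma zpa' {K : Type*} [Field K] (a c : ZMod 2) :
    ((-1:K))^(a+c).val = (-1)^a.val * (-1)^c.val := by
  rcases (by decide : ∀ x : ZMod 2, x = 0 ∨ x = 1) a with rfl | rfl <;>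
    rcases (by decide : ∀ x : ZMod 2, x = 0 ∨ x = 1) c with rfl | rfl <;>
    norm_num [show ZMod.val (2 : ZMod 2) = 0 from rfl, ZMod.val_one]

set_option linter.unusedSectionVars false in
private lemma chi_add' {K : Type*} [Field K] (b : Module.Basis (Fin n) (ZMod 2) F) (x y : F) :
    ((-1:K))^((b.repr (x+y)) 0).val = (-1)^((b.repr x) 0).val * (-1)^((b.repr y) 0).val := by
  rw [map_add, Finsupp.add_apply, zpa']

set_option linter.unusedSectionVars false in
private lemma sum_chi' {K : Type*} [Field K] [CharZero K] (b : Module.Basis (Fin n) (ZMod 2) F) :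
    ∑ x : F, ((-1:K))^((b.repr x) 0).val = 0 := by
  have key : ∑ x : F, ((-1:K))^((b.repr x) 0).val
      = ∑ x : F, ((-1:K))^((b.repr (b 0 + x)) 0).val :=
    (Fintype.sum_equiv (Equiv.addLeft (b 0)) _ _ (fun x => rfl)).symm
  have h1 : ((b.repr (b 0)) 0) = 1 := by simp
  have hneg : ∀ x : F, ((-1:K))^((b.repr (b 0 + x)) 0).val
      = -((-1:K))^((b.repr x) 0).val := by
    intro x; rw [chi_add', h1]; norm_num [ZMod.val_one]
  simp_rw [hneg, Finset.sum_neg_distrib] at key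
  have h2 : (2:K) * ∑ x : F, ((-1:K))^((b.repr x) 0).val = 0 := by linear_combination key
  exact (mul_eq_zero.mp h2).resolve_left two_ne_zero

private lemma sum_chi_mul' {K : Type*} [Field K] [CharZero K] (b : Module.Basis (Fin n) (ZMod 2) F)
    (c : F) :
    ∑ k : F, ((-1:K))^((b.repr (k * c)) 0).val
      = if c = 0 then (Fintype.card F : K) else 0 := by
  split_ifs with h
  · simp [h]
  · rw [← sum_chi' b]
    exact Fintype.sum_equiv (Equiv.mulRight₀ c h) _ _ (fun x => rfl)

set_option linter.unusedSectionVars false in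
private lemma neg_one_pow_nu' (b : Module.Basis (Fin n) (ZMod 2) F) (x : F) :
    ((-1:ℂ))^(nu b x) = (-1)^((b.repr x) 0).val := by
  rw [nu, ← Finset.prod_pow_eq_pow_sum]
  rw [Finset.prod_eq_single (0 : Fin n)]
  · simp
  · intro i _ hi
    apply Even.neg_one_pow
    refine Even.mul_left ?_ _
    rw [Nat.even_pow]
    exact ⟨even_two, fun h => hi (Fin.ext h)⟩
  · simp

set_option linter.unusedSectionVars false in
private lemma chi_sum' {ι : Type*} (s : Finset ι) (b : Module.Basis (Fin n) (ZMod 2) F) (f : ι → F) :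
    ∏ i ∈ s, ((-1:ℂ))^((b.repr (f i)) 0).val = (-1)^((b.repr (∑ i ∈ s, f i)) 0).val := by
  induction s using Finset.cons_induction with
  | empty => simp
  | cons a s ha ih => rw [Finset.prod_cons, Finset.sum_cons, chi_add', ih]

set_option linter.unusedSectionVars false in
private lemma sFactor_sq' (b : Module.Basis (Fin n) (ZMod 2) F) (j k : F) :
    (sFactor b j k)^2 = (-1:ℂ)^((b.repr (j * k * k)) 0).val := by
  have h1 : (sFactor b j k)^2 = ∏ r : Fin n, ∏ t : Fin n,
      ((-1:ℂ))^((b.repr (j * ((b.repr k) r • b r) * ((b.repr k) t • b t))) 0).val := by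
    rw [sFactor, ← Finset.prod_pow]
    refine Finset.prod_congr rfl fun r _ => ?_
    rw [← Finset.prod_pow]
    refine Finset.prod_congr rfl fun t _ => ?_
    rw [← pow_mul, mul_comm (nu _ _) 2, pow_mul, Complex.I_sq, neg_one_pow_nu']
  rw [h1]
  have hsum : ∀ r : Fin n, ∑ t : Fin n, j * ((b.repr k) r • b r) * ((b.repr k) t • b t)
      = j * ((b.repr k) r • b r) * k := by
    intro r
    rw [← Finset.mul_sum]
    congr 1
    exact b.sum_repr k
  calc ∏ r : Fin n, ∏ t : Fin n,
      ((-1:ℂ))^((b.repr (j * ((b.repr k) r • b r) * ((b.repr k) t • b t))) 0).val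
      = ∏ r : Fin n, ((-1:ℂ))^((b.repr (j * ((b.repr k) r • b r) * k)) 0).val := by
        refine Finset.prod_congr rfl fun r _ => ?_
        rw [chi_sum', hsum]
    _ = ((-1:ℂ))^((b.repr (∑ r : Fin n, j * ((b.repr k) r • b r) * k)) 0).val := chi_sum' _ _ _
    _ = _ := by
        congr 2
        rw [← Finset.sum_mul, ← Finset.mul_sum, b.sum_repr k]

set_option linter.unusedSectionVars false in
private lemma sum_num' (hF : Fintype.card F = 2 ^ n) (b : Module.Basis (Fin n) (ZMod 2) F)
    (α : F → ℝ) (hα1 : ∑ j : F, (α j) ^ 2 = 1) :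
    ∑ k : F, (∑ j : F, (-1 : ℝ) ^ ((b.repr (k * j)) 0).val * α j) ^ 2 = (2:ℝ) ^ n := by
  haveI : CharP F 2 := charF'
  have expand : ∀ k : F, (∑ j : F, (-1 : ℝ) ^ ((b.repr (k * j)) 0).val * α j) ^ 2
      = ∑ a : F, ∑ c' : F, (α a * α c') * (-1 : ℝ) ^ ((b.repr (k * (a + c'))) 0).val := by
    intro k
    rw [sq, Finset.sum_mul_sum]
    refine Finset.sum_congr rfl fun a _ => Finset.sum_congr rfl fun c' _ => ?_
    rw [mul_add, chi_add']
    ring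
  calc ∑ k : F, (∑ j : F, (-1 : ℝ) ^ ((b.repr (k * j)) 0).val * α j) ^ 2
      = ∑ a : F, ∑ c' : F, (α a * α c') * ∑ k : F, (-1 : ℝ) ^ ((b.repr (k * (a + c'))) 0).val := by
        simp_rw [expand, Finset.mul_sum]
        rw [Finset.sum_comm]
        exact Finset.sum_congr rfl fun a _ => Finset.sum_comm
    _ = ∑ a : F, ∑ c' : F, (α a * α c') * (if c' = a then (2:ℝ)^n else 0) := by
        refine Finset.sum_congr rfl fun a _ => Finset.sum_congr rfl fun c' _ => ?_
        rw [sum_chi_mul', hF]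
        have h : (a + c' = 0) ↔ (c' = a) := by
          rw [add_eq_zero_iff_eq_neg, CharTwo.neg_eq, eq_comm]
        rw [if_congr h rfl rfl]
        push_cast
        ring_nf
    _ = (2:ℝ)^n := by
        simp_rw [mul_ite, mul_zero, Finset.sum_ite_eq', Finset.mem_univ, if_true]
        have h : ∑ a : F, α a * α a * (2:ℝ)^n = (∑ a : F, (α a)^2) * (2:ℝ)^n := by
          rw [Finset.sum_mul]; exact Finset.sum_congr rfl fun a _ => by ring
        rw [h, hα1, one_mul]

set_option linter.unusedSectionVars false in
private lemma ZX_apply' (b : Module.Basis (Fin n) (ZMod 2) F) (a k : F) (p q : F) :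
    (phaseZ b a * shiftX k) p q
      = (-1:ℂ)^((b.repr (p * a)) 0).val * (if q = p + k then 1 else 0) := by
  rw [phaseZ, Matrix.diagonal_mul]
  rfl

set_option linter.unusedSectionVars false in
private lemma Sop_conj_apply' (b : Module.Basis (Fin n) (ZMod 2) F) (j k : F) (ρ : Matrix F F ℂ)
    (m l : F) :
    (Sop b j k * ρ * Sop b j k) m l
      = (-1:ℂ)^((b.repr (j * (k * (m + l)))) 0).val * ρ (m + k) (l + k) := by
  haveI : CharP F 2 := charF'
  have hS : Sop b j k * ρ * Sop b j k
      = (sFactor b j k)^2 • ((phaseZ b (j*k) * shiftX k) * ρ * (phaseZ b (j*k) * shiftX k)) := by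
    rw [Sop, smul_mul_assoc, smul_mul_assoc, Matrix.mul_smul, smul_smul, ← sq]
  rw [hS, Matrix.smul_apply, sFactor_sq']
  set A := phaseZ b (j*k) * shiftX k with hA
  have h2 : (2:F) = 0 := by exact_mod_cast CharP.cast_eq_zero F 2
  have hAap : ∀ p q : F, A p q
      = (-1:ℂ)^((b.repr (p * (j*k))) 0).val * (if q = p + k then 1 else 0) :=
    fun p q => ZX_apply' b (j*k) k p q
  have hAρ : ∀ q, (A * ρ) m q = (-1:ℂ)^((b.repr (m * (j*k))) 0).val * ρ (m+k) q := by
    intro q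
    rw [Matrix.mul_apply, Finset.sum_eq_single (m+k)]
    · rw [hAap]; simp
    · intro p _ hp; rw [hAap]; simp [hp]
    · simp
  have hmain : (A * ρ * A) m l
      = (-1:ℂ)^((b.repr (m * (j*k))) 0).val * ρ (m+k) (l+k)
        * (-1:ℂ)^((b.repr ((l+k) * (j*k))) 0).val := by
    rw [Matrix.mul_apply, Finset.sum_eq_single (l+k)]
    · rw [hAρ, hAap]
      have hkk : l + k + k = l := by linear_combination k * h2
      rw [if_pos hkk.symm]
      ring
    · intro q _ hq
      rw [hAρ, hAap]
      have hnq : ¬ (l = q + k) := fun h => hq (by linear_combination -h - k * h2)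
      simp [hnq]
    · simp
  rw [hmain]
  have harg : j*k*k + (m*(j*k) + (l+k)*(j*k)) = j*(k*(m+l)) := by
    linear_combination (j*k*k) * h2
  rw [← harg, chi_add', chi_add']
  simp only [smul_eq_mul]
  ring


/-- Let `α : F → ℝ` be nonnegative with `∑_j α_j² = 1` and
`(∑_j α_j)² < 2^n`. With `R := (∑_j α_j)² − 1`, `c_k := 2^{-n}(∑_j (-1)^{(k*j)_0} α_j)²`,
`Pr(k|α) := (∑_j (-1)^{(k*j)_0} α_j)² / (2^n − 1 − R)` for `k ≠ 0`, and
`ρ_l := ∑_{k ≠ 0} Pr(k|α) • E_{l+k,l+k}`, the function `Pr(·|α)` is a probability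
distribution on `F \ {0}` (so each `ρ_l` is positive semidefinite with trace 1), and
every matrix `ρ` admits the quasiprobability decomposition
`ρ = (1/(R+1)) • ∑_{j,k} c_k • (S_{j,k} * ρ * S_{j,k})
      − (2^n/(R+1) − 1) • ∑_l ρ_{l,l} • ρ_l`. -/
theorem stmt_12 (hF : Fintype.card F = 2 ^ n) (b : Module.Basis (Fin n) (ZMod 2) F)
    (α : F → ℝ) (hα0 : ∀ j : F, 0 ≤ α j) (hα1 : ∑ j : F, (α j) ^ 2 = 1)
    (hα2 : (∑ j : F, α j) ^ 2 < (2 : ℝ) ^ n)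
    (R : ℝ) (hR : R = (∑ j : F, α j) ^ 2 - 1)
    (c : F → ℝ)
    (hc : ∀ k : F, c k =
      ((2 : ℝ) ^ n)⁻¹ * (∑ j : F, (-1 : ℝ) ^ ((b.repr (k * j)) 0).val * α j) ^ 2)
    (Pr : F → ℝ)
    (hPr : ∀ k : F, Pr k =
      (∑ j : F, (-1 : ℝ) ^ ((b.repr (k * j)) 0).val * α j) ^ 2 / ((2 : ℝ) ^ n - 1 - R))
    (ρl : F → Matrix F F ℂ)
    (hρl : ∀ l : F, ρl l = ∑ k ∈ Finset.univ \ {(0 : F)},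
      Pr k • Matrix.single (l + k) (l + k) (1 : ℂ)) :
    (∀ k : F, 0 ≤ Pr k) ∧
    (∑ k ∈ Finset.univ \ {(0 : F)}, Pr k = 1) ∧
    (∀ l : F, (ρl l).PosSemidef ∧ (ρl l).trace = 1) ∧
    (∀ ρ : Matrix F F ℂ,
      ρ = (1 / (R + 1)) • (∑ j : F, ∑ k : F, c k • (Sop b j k * ρ * Sop b j k)) -
        ((2 : ℝ) ^ n / (R + 1) - 1) • ∑ l : F, ρ l l • ρl l) := by
  haveI : CharP F 2 := charF'
  have h2F : (2:F) = 0 := by exact_mod_cast CharP.cast_eq_zero F 2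
  have hPr' : ∀ k : F, Pr k
      = (∑ j : F, (-1 : ℝ) ^ ((b.repr (k * j)) 0).val * α j) ^ 2 / ((2:ℝ)^n - 1 - R) := hPr
  have hD : (0:ℝ) < (2:ℝ)^n - 1 - R := by rw [hR]; linarith
  have hNsum : ∑ k : F, (∑ j : F, (-1 : ℝ) ^ ((b.repr (k * j)) 0).val * α j) ^ 2 = (2:ℝ)^n :=
    sum_num' hF b α hα1
  have hN0 : (∑ j : F, (-1 : ℝ) ^ ((b.repr ((0:F) * j)) 0).val * α j) ^ 2 = (∑ j : F, α j)^2 := by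
    congr 1
    refine Finset.sum_congr rfl fun j _ => ?_
    simp
  have hexists : ∃ j : F, α j ≠ 0 := by
    by_contra h
    push_neg at h
    simp [h] at hα1
  obtain ⟨j0, hj0⟩ := hexists
  have hsum_pos : 0 < ∑ j : F, α j :=
    Finset.sum_pos' (fun i _ => hα0 i)
      ⟨j0, Finset.mem_univ _, lt_of_le_of_ne (hα0 j0) (Ne.symm hj0)⟩
  have hR1 : R + 1 > 0 := by rw [hR]; nlinarith
  have hR1' : R + 1 ≠ 0 := ne_of_gt hR1
  -- Part 1
  have part1 : ∀ k : F, 0 ≤ Pr k := by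
    intro k
    rw [hPr']
    exact div_nonneg (sq_nonneg _) hD.le
  -- Part 2
  have part2 : ∑ k ∈ Finset.univ \ {(0 : F)}, Pr k = 1 := by
    rw [Finset.sum_sdiff_eq_sub (Finset.subset_univ _), Finset.sum_singleton]
    simp_rw [hPr']
    rw [← Finset.sum_div, hNsum, hN0, hR]
    have hne : (2:ℝ)^n - (∑ j : F, α j)^2 ≠ 0 := ne_of_gt (by linarith)
    rw [show (2:ℝ)^n - 1 - ((∑ j : F, α j)^2 - 1) = (2:ℝ)^n - (∑ j : F, α j)^2 by ring,
      div_sub_div_same, div_self hne]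
  -- diagonal form of ρl
  have hdiag : ∀ l : F, ρl l
      = Matrix.diagonal (fun m => if m = l then 0 else ((Pr (m+l) : ℝ) : ℂ)) := by
    intro l
    ext m m'
    rw [hρl, Matrix.sum_apply]
    by_cases hml : m = l
    · subst hml
      refine (Finset.sum_eq_zero fun k hk => ?_).trans ?_
      · have hk0 : k ≠ 0 := by
          rw [Finset.mem_sdiff, Finset.mem_singleton] at hk
          exact hk.2
        have hne : m + k ≠ m := fun h => hk0 (by linear_combination h)
        rw [Matrix.smul_apply, Matrix.single_apply_of_row_ne hne, smul_zero]
      · simp [Matrix.diagonal_apply]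
    · have hmem : m + l ∈ Finset.univ \ {(0:F)} := by
        rw [Finset.mem_sdiff, Finset.mem_singleton]
        exact ⟨Finset.mem_univ _, fun h => hml (by linear_combination h - l * h2F)⟩
      rw [Finset.sum_eq_single_of_mem (m+l) hmem]
      · have hE : l + (m + l) = m := by linear_combination l * h2F
        rw [Matrix.smul_apply, hE]
        by_cases h' : m = m'
        · subst h'
          rw [Matrix.single_apply_same, Matrix.diagonal_apply_eq, if_neg hml]
          simp [Complex.real_smul]
        · rw [Matrix.single_apply_of_col_ne _ _ h', smul_zero,
            Matrix.diagonal_apply_ne _ h']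
      · intro k hk hkne
        have hne : l + k ≠ m := fun h => hkne (by linear_combination h - l * h2F)
        rw [Matrix.smul_apply, Matrix.single_apply_of_row_ne hne, smul_zero]
  -- Part 3
  have part3 : ∀ l : F, (ρl l).PosSemidef ∧ (ρl l).trace = 1 := by
    intro l
    constructor
    · rw [hdiag]
      refine Matrix.posSemidef_diagonal_iff.mpr fun i => ?_
      split_ifs
      · exact le_refl _
      · exact Complex.zero_le_real.mpr (part1 _)
    · rw [hρl, Matrix.trace_sum]
      have htr : ∀ k ∈ Finset.univ \ {(0:F)},
          (Pr k • Matrix.single (l+k) (l+k) (1:ℂ)).trace = ((Pr k : ℝ) : ℂ) := by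
        intro k _
        rw [Matrix.trace_smul, Matrix.trace_single_eq_same]
        simp [Complex.real_smul]
      rw [Finset.sum_congr rfl htr, ← Complex.ofReal_sum, part2, Complex.ofReal_one]
  refine ⟨part1, part2, part3, ?_⟩
  -- Part 4
  intro ρ
  have hBig : ∀ m l : F, (∑ j : F, ∑ k : F, c k • (Sop b j k * ρ * Sop b j k)) m l
      = ∑ k : F, (c k : ℂ) * ((if k*(m+l) = 0 then ((2:ℝ)^n : ℂ) else 0) * ρ (m+k) (l+k)) := by
    intro m l
    rw [Matrix.sum_apply]
    simp_rw [Matrix.sum_apply, Matrix.smul_apply, Sop_conj_apply']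
    rw [Finset.sum_comm]
    refine Finset.sum_congr rfl fun k _ => ?_
    rw [← Finset.smul_sum, ← Finset.sum_mul, sum_chi_mul' b (k*(m+l)), hF,
      Complex.real_smul]
    push_cast
    ring_nf
  have hc0 : c 0 * (2:ℝ)^n = R + 1 := by
    rw [hc 0, hN0, hR]
    have h2n : ((2:ℝ)^n) ≠ 0 := by positivity
    field_simp
    ring
  have hc0C : ((c 0 : ℝ) : ℂ) * (2:ℂ)^n = (R:ℂ) + 1 := by exact_mod_cast hc0
  have hR1C : ((R:ℂ) + 1) ≠ 0 := by
    intro h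
    exact hR1' (by exact_mod_cast h)
  have hkey : ∀ k : F, k ≠ 0 →
      (1/(R+1)) * (c k * (2:ℝ)^n) = ((2:ℝ)^n/(R+1) - 1) * Pr k := by
    intro k hk
    rw [hc k, hPr' k]
    have h2n : ((2:ℝ)^n) ≠ 0 := by positivity
    field_simp [hR1', ne_of_gt hD]
    ring
  ext m l
  rw [Matrix.sub_apply, Matrix.smul_apply, Matrix.smul_apply, hBig, Matrix.sum_apply]
  simp_rw [Matrix.smul_apply, hdiag]
  by_cases hml : m = l
  · subst hml
    have hmm : m + m = 0 := CharTwo.add_self_eq_zero m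
    have hTm : ∑ l' : F, ρ l' l' • (Matrix.diagonal
          (fun m' => if m' = l' then 0 else ((Pr (m'+l') : ℝ) : ℂ))) m m
        = ∑ k : F, ρ (m+k) (m+k) * (if k = 0 then 0 else ((Pr k : ℝ) : ℂ)) := by
      refine (Fintype.sum_equiv (Equiv.addLeft m) _ _ fun k => ?_).symm
      rw [Matrix.diagonal_apply_eq]
      have hmk : m + (m + k) = k := by linear_combination m * h2F
      have hiff : (m = m + k) ↔ (k = 0) := by
        constructor
        · intro h; linear_combination -h
        · intro h; rw [h, add_zero]
      show ρ (m+k) (m+k) * _ = ρ (m+k) (m+k) • _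
      rw [smul_eq_mul, if_congr hiff.symm rfl rfl]
      congr 2
      simp only [Equiv.coe_addLeft]
      rw [hmk]
    rw [hTm]
    have hcond : ∀ k : F, k * (m + m) = 0 := fun k => by rw [hmm, mul_zero]
    simp_rw [if_pos (hcond _)]
    rw [Complex.real_smul, Complex.real_smul, Finset.mul_sum, Finset.mul_sum,
      ← Finset.sum_sub_distrib]
    rw [Finset.sum_eq_single (0:F)]
    · rw [if_pos rfl, add_zero]
      push_cast
      field_simp
      linear_combination -ρ m m * hc0C
    · intro k _ hk
      have := hkey k hk
      have hC : ((1/(R+1) : ℝ) : ℂ) * (((c k : ℝ):ℂ) * (2:ℂ)^n)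
          = (((2:ℝ)^n/(R+1) - 1 : ℝ) : ℂ) * ((Pr k : ℝ) : ℂ) := by exact_mod_cast this
      rw [if_neg hk]
      push_cast at hC ⊢
      linear_combination ρ (m+k) (m+k) * hC
    · intro h
      exact absurd (Finset.mem_univ 0) h
  · have hml0 : m + l ≠ 0 := fun h => hml (by linear_combination h - l * h2F)
    have hT0 : ∑ l' : F, ρ l' l' • (Matrix.diagonal
          (fun m' => if m' = l' then 0 else ((Pr (m'+l') : ℝ) : ℂ))) m l
        = 0 := by
      refine Finset.sum_eq_zero fun l' _ => ?_
      rw [Matrix.diagonal_apply_ne _ hml, smul_zero]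
    rw [hT0, smul_zero, sub_zero]
    have hcond : ∀ k : F, (k * (m+l) = 0) ↔ (k = 0) := by
      intro k
      rw [mul_eq_zero]
      simp [hml0]
    rw [Finset.sum_eq_single (0:F)]
    · rw [if_pos (by rw [zero_mul]), add_zero, add_zero, Complex.real_smul]
      push_cast
      field_simp
      linear_combination -ρ m l * hc0C
    · intro k _ hk
      rw [if_neg (fun h => hk ((hcond k).mp h)), zero_mul, mul_zero]
    · intro h
      exact absurd (Finset.mem_univ 0) h
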